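/- Let K be the field of fractions of ℚ[x₀,x₁,x₂,x₃,x₄,x₅], set A = (x₂x₄+x₃x₅)/(x₀x₁), B = (x₁x₄+x₀x₅)/(x₂x₃), C = (x₀x₂+x₁x₃)/(x₄x₅) in K, and let τ'₁, τ'₂, τ'₃ be the maps on K⁶ defined by: τ'₁ replaces (v₀,v₁) by ((v₂v₄+v₃v₅)/v₁, (v₂v₄+v₃v₅)/v₀); τ'₂ replaces (v₂,v₃) by ((v₁v₄+v₀v₅)/v₃, (v₁v₄+v₀v₅)/v₂); τ'₃ replaces (v₄,v₅) by ((v₀v₂+v₁v₃)/v₅, (v₀v₂+v₁v₃)/v₄); each fixes the remaining entries. Let X = (x₀,…,x₅). Then for every finite word w = (a₁,…,aₙ) with letters in {1,2,3}, there exist natural numbers a₁,b₁,c₁,a₂,b₂,c₂,a₃,b₃,c₃ such that τ'₍aₙ₎(⋯(τ'₍a₁₎(X))⋯) = (x₀A^{a₁}B^{b₁}C^{c₁}, x₁A^{a₁}B^{b₁}C^{c₁}, x₂A^{a₂}B^{b₂}C^{c₂}, x₃A^{a₂}B^{b₂}C^{c₂}, x₄A^{a₃}B^{b₃}C^{c₃},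 x₅A^{a₃}B^{b₃}C^{c₃}). -/

import Mathlib

noncomputable section

/-- The polynomial ring ℚ[x₀,…,x₅]. -/
abbrev P : Type := MvPolynomial (Fin 6) ℚ

/-- K = Frac(ℚ[x₀,…,x₅]). -/
abbrev K : Type := FractionRing P

/-- The images of the variables x₀,…,x₅ in K. -/
def x (i : Fin 6) : K := algebraMap P K (MvPolynomial.X i)

/-- τ'₁ : replaces (v₀, v₁) by ((v₂v₄+v₃v₅)/v₁, (v₂v₄+v₃v₅)/v₀). -/
def tau1 (v : Fin 6 → K) : Fin 6 → K := fun k =>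
  if k = 0 then (v 2 * v 4 + v 3 * v 5) / v 1
  else if k = 1 then (v 2 * v 4 + v 3 * v 5) / v 0
  else v k

/-- τ'₂ : replaces (v₂, v₃) by ((v₁v₄+v₀v₅)/v₃, (v₁v₄+v₀v₅)/v₂). -/
def tau2 (v : Fin 6 → K) : Fin 6 → K := fun k =>
  if k = 2 then (v 1 * v 4 + v 0 * v 5) / v 3
  else if k = 3 then (v 1 * v 4 + v 0 * v 5) / v 2
  else v k

/-- τ'₃ : replaces (v₄, v₅) by ((v₀v₂+v₁v₃)/v₅, (v₀v₂+v₁v₃)/v₄). -/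
def tau3 (v : Fin 6 → K) : Fin 6 → K := fun k =>
  if k = 4 then (v 0 * v 2 + v 1 * v 3) / v 5
  else if k = 5 then (v 0 * v 2 + v 1 * v 3) / v 4
  else v k

/-- τ' indexed by Fin 3: `tau i` is τ'_{i+1}. -/
def tau : Fin 3 → (Fin 6 → K) → (Fin 6 → K)
  | 0 => tau1
  | 1 => tau2
  | 2 => tau3

/-- The initial labeled seed X = (x₀,…,x₅). -/
def X0 : Fin 6 → K := x

/-- Apply the maps τ'₍a₁₎, …, τ'₍aₙ₎ along the word `w` in left-to-right order. -/
def applyWord (w : List (Fin 3)) (v : Fin 6 → K) : Fin 6 → K :=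
  w.foldl (fun u a => tau a u) v

/-- A = (x₂x₄+x₃x₅)/(x₀x₁). -/
def A : K := (x 2 * x 4 + x 3 * x 5) / (x 0 * x 1)

/-- B = (x₁x₄+x₀x₅)/(x₂x₃). -/
def B : K := (x 1 * x 4 + x 0 * x 5) / (x 2 * x 3)

/-- C = (x₀x₂+x₁x₃)/(x₄x₅). -/
def C : K := (x 0 * x 2 + x 1 * x 3) / (x 4 * x 5)

/-! Write a labeled seed as `xᵢ · A^a B^b C^c` with integer exponents, antipodal positions sharing
the monomial. The exchange relations `x₂x₄ + x₃x₅ = A x₀x₁` (and its two cyclic analogues) show that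
`τ'₁` keeps this shape and replaces the exponent vector `e₁` of the first pair by
`(1,0,0) + e₂ + e₃ - e₁`; similarly for `τ'₂`, `τ'₃`.

For each letter, list its three exponents as `(p, q, r)` starting from the pair whose mutation
produces that letter. Initially this is `(0, 0, 0)`, and every mutation is a Vieta involution of the
quadric `p² + q² + r² - pq - qr - rp = p` in one of its variables. On integer points of the quadric
the product of the two roots is nonnegative, so nonnegative exponents stay nonnegative. -/

theorem x_ne_zero (i : Fin 6) : x i ≠ 0 :=
  (map_ne_zero_iff _ (IsFractionRing.injective P K)).2 (MvPolynomial.X_ne_zero i)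

theorem x_mul_add_x_mul_ne_zero (i j k l : Fin 6) : x i * x j + x k * x l ≠ 0 := by
  have hp : MvPolynomial.X i * MvPolynomial.X j + MvPolynomial.X k * MvPolynomial.X l ≠ (0 : P) :=
    fun h ↦ by simpa using congrArg (MvPolynomial.eval fun _ ↦ (1 : ℚ)) h
  simpa [x] using (map_ne_zero_iff _ (IsFractionRing.injective P K)).2 hp

theorem A_ne_zero : A ≠ 0 :=
  div_ne_zero (x_mul_add_x_mul_ne_zero 2 4 3 5) (mul_ne_zero (x_ne_zero 0) (x_ne_zero 1))

theorem B_ne_zero : B ≠ 0 :=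
  div_ne_zero (x_mul_add_x_mul_ne_zero 1 4 0 5) (mul_ne_zero (x_ne_zero 2) (x_ne_zero 3))

theorem C_ne_zero : C ≠ 0 :=
  div_ne_zero (x_mul_add_x_mul_ne_zero 0 2 1 3) (mul_ne_zero (x_ne_zero 4) (x_ne_zero 5))

theorem A_exchange : x 2 * x 4 + x 3 * x 5 = A * (x 0 * x 1) :=
  (div_mul_cancel₀ _ (mul_ne_zero (x_ne_zero 0) (x_ne_zero 1))).symm

theorem B_exchange : x 1 * x 4 + x 0 * x 5 = B * (x 2 * x 3) :=
  (div_mul_cancel₀ _ (mul_ne_zero (x_ne_zero 2) (x_ne_zero 3))).symm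

theorem C_exchange : x 0 * x 2 + x 1 * x 3 = C * (x 4 * x 5) :=
  (div_mul_cancel₀ _ (mul_ne_zero (x_ne_zero 4) (x_ne_zero 5))).symm

-- Fails over `ℚ` (take `p = 1/2`, `r = 1/4`): this is where integrality of the exponents enters.
theorem le_sq_sub_mul_add_sq (p r : ℤ) : p ≤ p ^ 2 - p * r + r ^ 2 := by
  rcases le_or_gt r 0 with hr | hr <;> nlinarith [sq_nonneg (p - r), sq_nonneg (p - 1)]

theorem nonneg_of_mul_nonneg_of_add_nonneg {R : Type*} [Ring R] [LinearOrder R]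
    [IsStrictOrderedRing R] {p p' : R} (hp : 0 ≤ p) (hmul : 0 ≤ p * p') (hadd : 0 ≤ p + p') :
    0 ≤ p' := by
  rcases hp.eq_or_lt with rfl | hp
  · simpa using hadd
  · exact nonneg_of_mul_nonneg_right hmul hp

structure Admissible (p q r : ℤ) : Prop where
  nonneg_fst : 0 ≤ p
  nonneg_snd : 0 ≤ q
  nonneg_thd : 0 ≤ r
  quadric : p ^ 2 + q ^ 2 + r ^ 2 - p * q - q * r - r * p = p

namespace Admissible

variable {p q r : ℤ}

theorem zero : Admissible 0 0 0 := ⟨le_rfl, le_rfl, le_rfl, by ring⟩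

theorem swap (h : Admissible p q r) : Admissible p r q :=
  ⟨h.nonneg_fst, h.nonneg_thd, h.nonneg_snd, by linear_combination h.quadric⟩

theorem mutate_fst (h : Admissible p q r) {p' : ℤ} (hp' : p + p' = q + r + 1) :
    Admissible p' q r := by
  have hmul : p * p' = (q - r) ^ 2 + q * r := by linear_combination p * hp' - h.quadric
  refine ⟨nonneg_of_mul_nonneg_of_add_nonneg h.nonneg_fst ?_ ?_, h.nonneg_snd, h.nonneg_thd, ?_⟩
  · rw [hmul]; exact add_nonneg (sq_nonneg _) (mul_nonneg h.nonneg_snd h.nonneg_thd)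
  · linarith [h.nonneg_snd, h.nonneg_thd]
  · linear_combination (p' - p) * hp' + h.quadric

theorem mutate_snd (h : Admissible p q r) {q' : ℤ} (hq' : q + q' = p + r) :
    Admissible p q' r := by
  have hmul : q * q' = p ^ 2 - p * r + r ^ 2 - p := by linear_combination q * hq' - h.quadric
  refine ⟨h.nonneg_fst, nonneg_of_mul_nonneg_of_add_nonneg h.nonneg_snd ?_ ?_, h.nonneg_thd, ?_⟩
  · rw [hmul]; exact sub_nonneg.2 (le_sq_sub_mul_add_sq p r)
  · linarith [h.nonneg_fst, h.nonneg_thd]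
  · linear_combination (q' - q) * hq' + h.quadric

theorem mutate_thd (h : Admissible p q r) {r' : ℤ} (hr' : r + r' = p + q) :
    Admissible p q r' :=
  (h.swap.mutate_snd hr').swap

end Admissible

def mono (a b c : ℤ) : K := A ^ a * B ^ b * C ^ c

theorem mono_ne_zero (a b c : ℤ) : mono a b c ≠ 0 :=
  mul_ne_zero (mul_ne_zero (zpow_ne_zero _ A_ne_zero) (zpow_ne_zero _ B_ne_zero))
    (zpow_ne_zero _ C_ne_zero)

theorem mono_mul_mono (a b c a' b' c' : ℤ) :
    mono a b c * mono a' b' c' = mono (a + a') (b + b') (c + c') := by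
  simp only [mono, zpow_add₀ A_ne_zero, zpow_add₀ B_ne_zero, zpow_add₀ C_ne_zero]
  ring

theorem mono_one_zero_zero : mono 1 0 0 = A := by simp [mono]
theorem mono_zero_one_zero : mono 0 1 0 = B := by simp [mono]
theorem mono_zero_zero_one : mono 0 0 1 = C := by simp [mono]

theorem mono_natCast (a b c : ℕ) : mono a b c = A ^ a * B ^ b * C ^ c := by
  simp [mono]

def factoredSeed (a₁ b₁ c₁ a₂ b₂ c₂ a₃ b₃ c₃ : ℤ) : Fin 6 → K :=
  ![x 0 * mono a₁ b₁ c₁, x 1 * mono a₁ b₁ c₁,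
    x 2 * mono a₂ b₂ c₂, x 3 * mono a₂ b₂ c₂,
    x 4 * mono a₃ b₃ c₃, x 5 * mono a₃ b₃ c₃]

theorem exchange_div {u v s t y z L m m₁ m₂ n : K} (hz : z ≠ 0) (hm : m ≠ 0)
    (hL : u * s + v * t = L * (y * z)) (hn : n * m = L * (m₁ * m₂)) :
    (u * m₁ * (s * m₂) + v * m₁ * (t * m₂)) / (z * m) = y * n := by
  rw [div_eq_iff (mul_ne_zero hz hm)]
  linear_combination (m₁ * m₂) * hL - (y * z) * hn

section

variable (a₁ b₁ c₁ a₂ b₂ c₂ a₃ b₃ c₃ : ℤ)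

theorem tau1_factoredSeed :
    tau1 (factoredSeed a₁ b₁ c₁ a₂ b₂ c₂ a₃ b₃ c₃) =
      factoredSeed (a₂ + a₃ + 1 - a₁) (b₂ + b₃ - b₁) (c₂ + c₃ - c₁) a₂ b₂ c₂ a₃ b₃ c₃ := by
  have hn : mono (a₂ + a₃ + 1 - a₁) (b₂ + b₃ - b₁) (c₂ + c₃ - c₁) * mono a₁ b₁ c₁ =
      A * (mono a₂ b₂ c₂ * mono a₃ b₃ c₃) := by
    rw [← mono_one_zero_zero]; simp only [mono_mul_mono]; congr 1 <;> ring
  ext k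
  fin_cases k <;> try rfl
  · exact exchange_div (x_ne_zero 1) (mono_ne_zero _ _ _) A_exchange hn
  · exact exchange_div (x_ne_zero 0) (mono_ne_zero _ _ _) (A_exchange.trans (by ring)) hn

theorem tau2_factoredSeed :
    tau2 (factoredSeed a₁ b₁ c₁ a₂ b₂ c₂ a₃ b₃ c₃) =
      factoredSeed a₁ b₁ c₁ (a₁ + a₃ - a₂) (b₁ + b₃ + 1 - b₂) (c₁ + c₃ - c₂) a₃ b₃ c₃ := by
  have hn : mono (a₁ + a₃ - a₂) (b₁ + b₃ + 1 - b₂) (c₁ + c₃ - c₂) * mono a₂ b₂ c₂ =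
      B * (mono a₁ b₁ c₁ * mono a₃ b₃ c₃) := by
    rw [← mono_zero_one_zero]; simp only [mono_mul_mono]; congr 1 <;> ring
  ext k
  fin_cases k <;> try rfl
  · exact exchange_div (x_ne_zero 3) (mono_ne_zero _ _ _) B_exchange hn
  · exact exchange_div (x_ne_zero 2) (mono_ne_zero _ _ _) (B_exchange.trans (by ring)) hn

theorem tau3_factoredSeed :
    tau3 (factoredSeed a₁ b₁ c₁ a₂ b₂ c₂ a₃ b₃ c₃) =
      factoredSeed a₁ b₁ c₁ a₂ b₂ c₂ (a₁ + a₂ - a₃) (b₁ + b₂ - b₃) (c₁ + c₂ + 1 - c₃) := by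
  have hn : mono (a₁ + a₂ - a₃) (b₁ + b₂ - b₃) (c₁ + c₂ + 1 - c₃) * mono a₃ b₃ c₃ =
      C * (mono a₁ b₁ c₁ * mono a₂ b₂ c₂) := by
    rw [← mono_zero_zero_one]; simp only [mono_mul_mono]; congr 1 <;> ring
  ext k
  fin_cases k <;> try rfl
  · exact exchange_div (x_ne_zero 5) (mono_ne_zero _ _ _) C_exchange hn
  · exact exchange_div (x_ne_zero 4) (mono_ne_zero _ _ _) (C_exchange.trans (by ring)) hn

end

def IsAdmissibleSeed (v : Fin 6 → K) : Prop :=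
  ∃ a₁ b₁ c₁ a₂ b₂ c₂ a₃ b₃ c₃ : ℤ,
    Admissible a₁ a₂ a₃ ∧ Admissible b₂ b₁ b₃ ∧ Admissible c₃ c₁ c₂ ∧
      v = factoredSeed a₁ b₁ c₁ a₂ b₂ c₂ a₃ b₃ c₃

theorem isAdmissibleSeed_X0 : IsAdmissibleSeed X0 := by
  refine ⟨0, 0, 0, 0, 0, 0, 0, 0, 0, .zero, .zero, .zero, ?_⟩
  ext k
  fin_cases k <;> simp [X0, factoredSeed, mono]

theorem IsAdmissibleSeed.tau {v : Fin 6 → K} (hv : IsAdmissibleSeed v) (i : Fin 3) :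
    IsAdmissibleSeed (tau i v) := by
  obtain ⟨a₁, b₁, c₁, a₂, b₂, c₂, a₃, b₃, c₃, ha, hb, hc, rfl⟩ := hv
  fin_cases i
  · exact ⟨_, _, _, _, _, _, _, _, _, ha.mutate_fst (by ring), hb.mutate_snd (by ring),
      hc.mutate_snd (by ring), tau1_factoredSeed ..⟩
  · exact ⟨_, _, _, _, _, _, _, _, _, ha.mutate_snd (by ring), hb.mutate_fst (by ring),
      hc.mutate_thd (by ring), tau2_factoredSeed ..⟩
  · exact ⟨_, _, _, _, _, _, _, _, _, ha.mutate_thd (by ring), hb.mutate_thd (by ring),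
      hc.mutate_fst (by ring), tau3_factoredSeed ..⟩

theorem IsAdmissibleSeed.applyWord {v : Fin 6 → K} (hv : IsAdmissibleSeed v)
    (w : List (Fin 3)) : IsAdmissibleSeed (applyWord w v) := by
  induction w generalizing v with
  | nil => exact hv
  | cons i w ih => exact ih (hv.tau i)

/-- The Factorization Phenomenon (Proposition 2.4): every cluster produced by a
τ-mutation sequence factors with leading terms xᵢ and nonnegative exponents of
A, B, C, antipodal positions sharing exponents. -/
theorem factorization_phenomenon (w : List (Fin 3)) :
    ∃ a₁ b₁ c₁ a₂ b₂ c₂ a₃ b₃ c₃ : ℕ,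
      applyWord w X0 =
        ![x 0 * A ^ a₁ * B ^ b₁ * C ^ c₁,
          x 1 * A ^ a₁ * B ^ b₁ * C ^ c₁,
          x 2 * A ^ a₂ * B ^ b₂ * C ^ c₂,
          x 3 * A ^ a₂ * B ^ b₂ * C ^ c₂,
          x 4 * A ^ a₃ * B ^ b₃ * C ^ c₃,
          x 5 * A ^ a₃ * B ^ b₃ * C ^ c₃] := by
  obtain ⟨a₁, b₁, c₁, a₂, b₂, c₂, a₃, b₃, c₃, ⟨ha₁, ha₂, ha₃, -⟩, ⟨hb₂, hb₁, hb₃, -⟩,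
    ⟨hc₃, hc₁, hc₂, -⟩, hv⟩ := isAdmissibleSeed_X0.applyWord w
  lift a₁ to ℕ using ha₁
  lift b₁ to ℕ using hb₁
  lift c₁ to ℕ using hc₁
  lift a₂ to ℕ using ha₂
  lift b₂ to ℕ using hb₂
  lift c₂ to ℕ using hc₂
  lift a₃ to ℕ using ha₃
  lift b₃ to ℕ using hb₃
  lift c₃ to ℕ using hc₃
  refine ⟨a₁, b₁, c₁, a₂, b₂, c₂, a₃, b₃, c₃, ?_⟩
  simp only [hv, factoredSeed, mono_natCast, mul_assoc]
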